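/- arXiv:2104.06497 — 2 statements merged into one kernel-verified Lean document; each statement's English description precedes it below -/
import Mathlib

section
/- Let X be a real infinite-dimensional Banach space with a Schauder basis (x_n)_{n=1}^∞ with basis constant K and coordinate functionals (x*_n). Then (1/(2K))·bc₂((x*_n)) ≤ sh((x_n)) ≤ K·bc₂((x*_n)), where bc₂((x*_n)) is computed for the basic sequence (x*_n) inside its closed linear span V, with biorthogonal functionals (j x_n) ⊆ V* given by ⟨j x, x*⟩ = x*(x). -/
open Filter Metric NormedSpace Set Topology

noncomputable section

variable {E : Type*} [NormedAddCommGroup E] [NormedSpace ℝ E]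

/-- `f` is the sequence of coordinate functionals of the Schauder basis `x`:
every vector has an expansion along `x`, and such expansions are unique. -/
structure IsSchauderBasis (x : ℕ → E) (f : ℕ → E →L[ℝ] ℝ) : Prop where
  expand : ∀ v : E,
    Tendsto (fun n => ∑ i ∈ Finset.range n, f i v • x i) atTop (𝓝 v)
  unique : ∀ (a : ℕ → ℝ) (v : E),
    Tendsto (fun n => ∑ i ∈ Finset.range n, a i • x i) atTop (𝓝 v) → ∀ i, a i = f i v

/-- the `n`-th basis projection `P_n`. -/
def basisProj (x : ℕ → E) (f : ℕ → E →L[ℝ] ℝ) (n : ℕ) : E →L[ℝ] E :=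
  ∑ i ∈ Finset.range n, (f i).smulRight (x i)

/-- closed linear span of `{y i : i ≥ n}`. -/
def tailSpan (y : ℕ → E) (n : ℕ) : Submodule ℝ E :=
  (Submodule.span ℝ (y '' {i | n ≤ i})).topologicalClosure

/-- `‖g‖_n` : the norm of the restriction of `g` to the closed span of the tail of `y`. -/
def tailNorm (y : ℕ → E) (g : E →L[ℝ] ℝ) (n : ℕ) : ℝ :=
  ‖g.comp (tailSpan y n).subtypeL‖

/-- the quantity `sh` measuring how far a basic sequence is from being shrinking. -/
def sh (y : ℕ → E) : ℝ :=
  sSup ((fun g : E →L[ℝ] ℝ => limsup (tailNorm y g) atTop) '' {g | ‖g‖ ≤ 1})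

/-- non-symmetrised Hausdorff distance `d̂(A,B)`. -/
def hdist (A B : Set E) : ℝ := sSup ((fun a => infDist a B) '' A)

/-- ordinary distance between two sets. -/
def setDist (A B : Set E) : ℝ := sInf {d : ℝ | ∃ a ∈ A, ∃ b ∈ B, d = dist a b}

/-- `ca` measures how far a sequence is from being norm-Cauchy. -/
def ca (z : ℕ → E) : ℝ :=
  ⨅ n : ℕ, sSup {d : ℝ | ∃ k, n ≤ k ∧ ∃ l, n ≤ l ∧ d = ‖z k - z l‖}

/-- measure of non-separability. -/
def sep (A : Set E) : ℝ :=
  sInf {ε : ℝ | 0 < ε ∧ ∃ C : Set E, C.Countable ∧ ∀ a ∈ A, ∃ c ∈ C, ‖a - c‖ ≤ ε}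

/-- `V`: the closed linear span of the coordinate functionals. -/
def dualSpan (g : ℕ → E →L[ℝ] ℝ) : Submodule ℝ (StrongDual ℝ E) :=
  (Submodule.span ℝ (Set.range g)).topologicalClosure

lemma mem_dualSpan (g : ℕ → E →L[ℝ] ℝ) (i : ℕ) : g i ∈ dualSpan g :=
  Submodule.le_topologicalClosure _ (Submodule.subset_span ⟨i, rfl⟩)

/-- the quantity `bc₁` measuring non-bounded-completeness. -/
def bc1 (y : ℕ → E) : ℝ :=
  sSup {c : ℝ | ∃ a : ℕ → ℝ,
    (∀ n, ‖∑ i ∈ Finset.range n, a i • y i‖ ≤ 1) ∧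
    c = ca (fun n => ∑ i ∈ Finset.range n, a i • y i)}

/-- the quantity `bc₂`. -/
def bc2 (y : ℕ → E) (g : ℕ → E →L[ℝ] ℝ) : ℝ :=
  sSup {c : ℝ | ∃ φ : ↥(dualSpan g) →L[ℝ] ℝ,
    @norm _ (@ContinuousLinearMap.hasOpNorm ℝ ℝ ↥(dualSpan g) ℝ _ _ _ _ _ _ (RingHom.id ℝ)) φ ≤ 1 ∧
    c = ca (fun n => ∑ i ∈ Finset.range n, φ ⟨g i, mem_dualSpan g i⟩ • y i)}

/-- the quantity `bc₃`. -/
def bc3 (y : ℕ → E) (g : ℕ → E →L[ℝ] ℝ) : ℝ :=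
  sSup {c : ℝ | ∃ Φ : StrongDual ℝ (StrongDual ℝ E), ‖Φ‖ ≤ 1 ∧
    c = ca (fun n => ∑ i ∈ Finset.range n, Φ (g i) • y i)}

/-- `α_Y(X)`: measures how well `Y` embeds isomorphically into `X`. -/
def alpha (Y X : Type*) [NormedAddCommGroup Y] [NormedSpace ℝ Y]
    [NormedAddCommGroup X] [NormedSpace ℝ X] : ℝ :=
  sSup {c : ℝ | ∃ T : Y →L[ℝ] X, ‖T‖ ≤ 1 ∧ ∀ y : Y, c * ‖y‖ ≤ ‖T y‖}

/-- `β_Y(X)`: measures how well `Y` embeds complementably into `X`. -/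
def beta (Y X : Type*) [NormedAddCommGroup Y] [NormedSpace ℝ Y]
    [NormedAddCommGroup X] [NormedSpace ℝ X] : ℝ :=
  sSup {c : ℝ | ∃ (A : X →L[ℝ] Y) (B : Y →L[ℝ] X),
    A.comp B = ContinuousLinearMap.id ℝ Y ∧ c * (‖A‖ * ‖B‖) ≤ 1}

/-- weak-star closure of a subset of the bidual. -/
def wstarClosure {X : Type*} [NormedAddCommGroup X] [NormedSpace ℝ X]
    (S : Set (StrongDual ℝ (StrongDual ℝ X))) : Set (StrongDual ℝ (StrongDual ℝ X)) :=
  {z | StrongDual.toWeakDual z ∈ closure (StrongDual.toWeakDual '' S)}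

/-- the measure of weak non-compactness `wk_X(A)`. -/
def wk (X : Type*) [NormedAddCommGroup X] [NormedSpace ℝ X] (A : Set X) : ℝ :=
  hdist (wstarClosure ((inclusionInDoubleDual ℝ X) '' A))
    (Set.range (inclusionInDoubleDual ℝ X))

/-- weak-star cluster points in the bidual of a sequence in `X`. -/
def wclust {X : Type*} [NormedAddCommGroup X] [NormedSpace ℝ X] (u : ℕ → X) :
    Set (StrongDual ℝ (StrongDual ℝ X)) :=
  {z | MapClusterPt (StrongDual.toWeakDual z) atTop
      (fun n => StrongDual.toWeakDual (inclusionInDoubleDual ℝ X (u n)))}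

/-- the measure of weak non-compactness `wck_X(A)`. -/
def wck (X : Type*) [NormedAddCommGroup X] [NormedSpace ℝ X] (A : Set X) : ℝ :=
  sSup {c : ℝ | ∃ u : ℕ → X, (∀ n, u n ∈ A) ∧
    c = setDist (wclust u) (Set.range (inclusionInDoubleDual ℝ X))}


/-- the canonical map `j : X → V*` for a subspace `V` of the dual,
`⟨j v, x*⟩ = x*(v)`. -/
def jfun {X : Type*} [NormedAddCommGroup X] [NormedSpace ℝ X]
    (V : Submodule ℝ (StrongDual ℝ X)) (v : X) : ↥V →L[ℝ] ℝ :=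
  (inclusionInDoubleDual ℝ X v).comp V.subtypeL

/-- the space `ℓ₁` of absolutely summable real sequences. -/
abbrev ell1 : Type := lp (fun _ : ℕ => ℝ) 1

/-- the space `c₀` of real sequences converging to zero, with the sup norm. -/
abbrev czero : Type := ZeroAtInftyContinuousMap ℕ ℝ

end

/-!
For `φ ∈ W*` put `g = φ ∘ j ∈ X*`; then the partial sums `∑_{i<n} φ(j xᵢ) x*ᵢ` are exactly
`g ∘ Pₙ`. For `k, l ≥ n` the functional `g ∘ (P_k - P_l)` factors through the tail span, on which
`g` has norm `‖g‖ₙ`, while `‖P_k - P_l‖ ≤ 2K`; hence `ca ≤ 2K · limsup ‖g‖ₙ ≤ 2K · sh`.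
Conversely, on the tail span `Pₙ = 0` and `P_k v → v`, so `‖g‖ₙ` is bounded by the oscillation of
`(g ∘ P_k)_{k ≥ n}`. As `‖v‖ ≤ K ‖j v‖` (test `j v` against `x* ∘ Pₙ ∈ V`), `j` maps `X`
isomorphically onto `W`, so every `g ∈ B_{X*}` is `K · (φ ∘ j)` for some `φ ∈ B_{W*}`, and
`sh ≤ K · bc₂` follows.
-/

section Oscillation

variable {E : Type*} [NormedAddCommGroup E]

theorem ca_le_of_norm_sub_le {z : ℕ → E} {c : ℝ} (n : ℕ)
    (h : ∀ k l, n ≤ k → n ≤ l → ‖z k - z l‖ ≤ c) : ca z ≤ c := by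
  refine (ciInf_le ⟨0, ?_⟩ n).trans (csSup_le ⟨0, n, le_rfl, n, le_rfl, by simp⟩ ?_)
  · rintro - ⟨m, rfl⟩
    exact Real.sSup_nonneg fun d ⟨k, _, l, _, hd⟩ => hd ▸ norm_nonneg _
  · rintro d ⟨k, hk, l, hl, rfl⟩
    exact h k l hk hl

theorem le_ca_of_forall_le {z : ℕ → E} (hz : BddAbove (range fun n => ‖z n‖)) {a : ℝ}
    (h : ∀ n c, (∀ k l, n ≤ k → n ≤ l → ‖z k - z l‖ ≤ c) → a ≤ c) : a ≤ ca z := by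
  obtain ⟨C, hC⟩ := hz
  refine le_ciInf fun n => h n _ fun k l hk hl => le_csSup ⟨C + C, ?_⟩ ⟨k, hk, l, hl, rfl⟩
  rintro - ⟨k, -, l, -, rfl⟩
  exact (norm_sub_le _ _).trans (add_le_add (hC ⟨k, rfl⟩) (hC ⟨l, rfl⟩))

end Oscillation

section TailNorm

variable {E : Type*} [NormedAddCommGroup E] [NormedSpace ℝ E]

theorem tailNorm_nonneg (y : ℕ → E) (g : E →L[ℝ] ℝ) (n : ℕ) : 0 ≤ tailNorm y g n :=
  norm_nonneg (g.comp (tailSpan y n).subtypeL)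

theorem tailSpan_antitone (y : ℕ → E) : Antitone (tailSpan y) := fun _ _ h =>
  Submodule.topologicalClosure_mono (Submodule.span_mono (image_mono fun _ hi => h.trans hi))

theorem abs_apply_le_tailNorm {y : ℕ → E} {g : E →L[ℝ] ℝ} {n : ℕ} {v : E}
    (hv : v ∈ tailSpan y n) : |g v| ≤ tailNorm y g n * ‖v‖ :=
  (g.comp (tailSpan y n).subtypeL).le_opNorm ⟨v, hv⟩

theorem tailNorm_le_of_abs_apply_le {y : ℕ → E} {g : E →L[ℝ] ℝ} {n : ℕ} {c : ℝ} (hc : 0 ≤ c)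
    (h : ∀ v ∈ tailSpan y n, |g v| ≤ c * ‖v‖) : tailNorm y g n ≤ c :=
  ContinuousLinearMap.opNorm_le_bound _ hc fun v => h v v.2

theorem tailNorm_le_norm (y : ℕ → E) (g : E →L[ℝ] ℝ) (n : ℕ) : tailNorm y g n ≤ ‖g‖ :=
  tailNorm_le_of_abs_apply_le (norm_nonneg g) fun v _ => g.le_opNorm v

theorem tailNorm_antitone (y : ℕ → E) (g : E →L[ℝ] ℝ) : Antitone (tailNorm y g) :=
  fun _ _ h => tailNorm_le_of_abs_apply_le (tailNorm_nonneg y g _) fun _ hv =>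
    abs_apply_le_tailNorm (tailSpan_antitone y h hv)

theorem tendsto_tailNorm_limsup (y : ℕ → E) (g : E →L[ℝ] ℝ) :
    Tendsto (tailNorm y g) atTop (𝓝 (limsup (tailNorm y g) atTop)) := by
  have h := tendsto_atTop_ciInf (tailNorm_antitone y g)
    ⟨0, forall_mem_range.2 (tailNorm_nonneg y g)⟩
  rwa [h.limsup_eq]

theorem limsup_tailNorm_le (y : ℕ → E) (g : E →L[ℝ] ℝ) (n : ℕ) :
    limsup (tailNorm y g) atTop ≤ tailNorm y g n :=
  (tailNorm_antitone y g).le_of_tendsto (tendsto_tailNorm_limsup y g) n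

theorem limsup_tailNorm_le_sh (y : ℕ → E) {g : E →L[ℝ] ℝ} (hg : ‖g‖ ≤ 1) :
    limsup (tailNorm y g) atTop ≤ sh y := by
  refine le_csSup ⟨1, ?_⟩ ⟨g, hg, rfl⟩
  rintro - ⟨g', hg', rfl⟩
  exact ((limsup_tailNorm_le y g' 0).trans (tailNorm_le_norm y g' 0)).trans hg'

end TailNorm

section BasisProj

variable {E : Type*} [NormedAddCommGroup E] [NormedSpace ℝ E] {x : ℕ → E} {f : ℕ → E →L[ℝ] ℝ}

theorem basisProj_apply (x : ℕ → E) (f : ℕ → E →L[ℝ] ℝ) (n : ℕ) (v : E) :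
    basisProj x f n v = ∑ i ∈ Finset.range n, f i v • x i := by
  simp [basisProj]

theorem basisProj_sub_basisProj_mem_tailSpan {n k l : ℕ} (hk : n ≤ k) (hl : n ≤ l) (v : E) :
    basisProj x f k v - basisProj x f l v ∈ tailSpan x n := by
  wlog hkl : l ≤ k generalizing k l
  · simpa using (tailSpan x n).neg_mem (this hl hk (le_of_not_ge hkl))
  rw [basisProj_apply, basisProj_apply, ← Finset.sum_Ico_eq_sub _ hkl]
  refine Submodule.le_topologicalClosure _ (Submodule.sum_mem _ fun i hi => ?_)
  exact Submodule.smul_mem _ _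
    (Submodule.subset_span ⟨i, hl.trans (Finset.mem_Ico.mp hi).1, rfl⟩)

theorem norm_comp_basisProj_sub_le {K : ℝ} (hK : ∀ n, ‖basisProj x f n‖ ≤ K)
    (g : E →L[ℝ] ℝ) {n k l : ℕ} (hk : n ≤ k) (hl : n ≤ l) :
    ‖g.comp (basisProj x f k) - g.comp (basisProj x f l)‖ ≤ 2 * K * tailNorm x g n := by
  have hK0 : 0 ≤ K := (norm_nonneg _).trans (hK 0)
  refine ContinuousLinearMap.opNorm_le_bound _
    (mul_nonneg (by positivity) (tailNorm_nonneg x g n)) fun v => ?_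
  have hPv : ‖basisProj x f k v - basisProj x f l v‖ ≤ 2 * K * ‖v‖ := by
    have := (norm_sub_le _ _).trans (add_le_add
      ((basisProj x f k).le_of_opNorm_le (hK k) v) ((basisProj x f l).le_of_opNorm_le (hK l) v))
    linarith
  calc ‖g (basisProj x f k v) - g (basisProj x f l v)‖
      = |g (basisProj x f k v - basisProj x f l v)| := by rw [map_sub, Real.norm_eq_abs]
    _ ≤ tailNorm x g n * ‖basisProj x f k v - basisProj x f l v‖ :=
        abs_apply_le_tailNorm (basisProj_sub_basisProj_mem_tailSpan hk hl v)
    _ ≤ tailNorm x g n * (2 * K * ‖v‖) := by gcongr; exact tailNorm_nonneg x g n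
    _ = 2 * K * tailNorm x g n * ‖v‖ := by ring

namespace IsSchauderBasis

theorem coord_apply_basis (hb : IsSchauderBasis x f) (i k : ℕ) :
    f i (x k) = if i = k then 1 else 0 := by
  refine (hb.unique (fun i => if i = k then 1 else 0) (x k) ?_ i).symm
  refine tendsto_atTop_of_eventually_const (i₀ := k + 1) fun n hn => ?_
  simp [ite_smul, Finset.mem_range.mpr hn]

theorem tendsto_basisProj (hb : IsSchauderBasis x f) (v : E) :
    Tendsto (fun n => basisProj x f n v) atTop (𝓝 v) := by
  simpa only [← basisProj_apply] using hb.expand v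

theorem basisProj_basis_of_lt (hb : IsSchauderBasis x f) {i n : ℕ} (h : i < n) :
    basisProj x f n (x i) = x i := by
  simp [basisProj_apply, hb.coord_apply_basis, ite_smul, Finset.mem_range.mpr h]

theorem basisProj_eq_zero_of_mem_tailSpan (hb : IsSchauderBasis x f) {n : ℕ} {v : E}
    (hv : v ∈ tailSpan x n) : basisProj x f n v = 0 := by
  suffices tailSpan x n ≤ LinearMap.ker (basisProj x f n : E →ₗ[ℝ] E) from
    LinearMap.mem_ker.1 (this hv)
  refine Submodule.topologicalClosure_minimal _ ?_ (basisProj x f n).isClosed_ker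
  rw [Submodule.span_le]
  rintro - ⟨i, hi, rfl⟩
  rw [SetLike.mem_coe, LinearMap.mem_ker, ContinuousLinearMap.coe_coe, basisProj_apply]
  exact Finset.sum_eq_zero fun j hj => by
    rw [hb.coord_apply_basis, if_neg (by grind), zero_smul]

theorem bddAbove_norm_basisProj [CompleteSpace E] (hb : IsSchauderBasis x f) :
    BddAbove (range fun n => ‖basisProj x f n‖) := by
  obtain ⟨C, hC⟩ := banach_steinhaus fun v =>
    (hb.tendsto_basisProj v).norm.bddAbove_range.imp fun _ h n => h ⟨n, rfl⟩
  exact ⟨C, forall_mem_range.2 hC⟩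

theorem one_le_norm_basisProj_one (hb : IsSchauderBasis x f) : 1 ≤ ‖basisProj x f 1‖ := by
  have hx0 : x 0 ≠ 0 := fun h => by simpa [h] using hb.coord_apply_basis 0 0
  have h1 : 1 * ‖x 0‖ ≤ ‖basisProj x f 1‖ * ‖x 0‖ := by
    simpa only [hb.basisProj_basis_of_lt zero_lt_one, one_mul] using
      (basisProj x f 1).le_opNorm (x 0)
  exact le_of_mul_le_mul_right h1 (norm_pos_iff.2 hx0)

theorem tailNorm_le_of_norm_comp_basisProj_sub_le (hb : IsSchauderBasis x f)
    {g : E →L[ℝ] ℝ} {n : ℕ} {c : ℝ}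
    (h : ∀ k, n ≤ k → ‖g.comp (basisProj x f k) - g.comp (basisProj x f n)‖ ≤ c) :
    tailNorm x g n ≤ c := by
  refine tailNorm_le_of_abs_apply_le ((norm_nonneg _).trans (h n le_rfl)) fun v hv => ?_
  have hlim : Tendsto (fun k => g (basisProj x f k v) - g (basisProj x f n v)) atTop
      (𝓝 (g v)) := by
    simpa only [hb.basisProj_eq_zero_of_mem_tailSpan hv, map_zero, sub_zero,
      Function.comp_def] using
      (g.continuous.tendsto v).comp (hb.tendsto_basisProj v)
  refine le_of_tendsto hlim.abs (eventually_atTop.2 ⟨n, fun k hk => ?_⟩)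
  exact ((g.comp (basisProj x f k) - g.comp (basisProj x f n)).le_opNorm v).trans
    (by gcongr; exact h k hk)

end IsSchauderBasis

end BasisProj

theorem ContinuousLinearMap.exists_comp_eq_of_surjective {𝕜 E F G : Type*}
    [NontriviallyNormedField 𝕜] [NormedAddCommGroup E] [NormedSpace 𝕜 E]
    [NormedAddCommGroup F] [NormedSpace 𝕜 F] [NormedAddCommGroup G] [NormedSpace 𝕜 G]
    (T : E →L[𝕜] F) (hT : Function.Surjective T) {C : ℝ} (hC : 0 ≤ C)
    (hTC : ∀ u, ‖u‖ ≤ C * ‖T u‖) (g : E →L[𝕜] G) :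
    ∃ φ : F →L[𝕜] G, φ.comp T = g ∧ ‖φ‖ ≤ C * ‖g‖ := by
  have hinj : Function.Injective T := (injective_iff_map_eq_zero T).2 fun u hu =>
    norm_le_zero_iff.1 (by simpa [hu] using hTC u)
  let e := LinearEquiv.ofBijective (T : E →ₗ[𝕜] F) ⟨hinj, hT⟩
  have hbound : ∀ w, ‖g (e.symm w)‖ ≤ C * ‖g‖ * ‖w‖ := fun w => calc
    ‖g (e.symm w)‖ ≤ ‖g‖ * (C * ‖T (e.symm w)‖) := g.le_of_opNorm_le_of_le le_rfl (hTC _)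
    _ = C * ‖g‖ * ‖w‖ := by rw [show T (e.symm w) = w from e.apply_symm_apply w]; ring
  refine ⟨(g.toLinearMap ∘ₗ e.symm.toLinearMap).mkContinuous _ hbound, ?_,
    LinearMap.mkContinuous_norm_le _ (by positivity) _⟩
  ext u
  exact congrArg g (e.symm_apply_apply u)

section DualSpace

variable {X : Type*} [NormedAddCommGroup X] [NormedSpace ℝ X]

-- `↥V` carries the subspace topology of the strong dual and the topology of its norm, which agree
-- only after unfolding, so instance search needs the normed structure on `V →L[ℝ] ℝ` spelled out.
noncomputable instance (V : Submodule ℝ (StrongDual ℝ X)) : NormedAddCommGroup (V →L[ℝ] ℝ) :=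
  ContinuousLinearMap.toNormedAddCommGroup (E := V) (F := ℝ) (σ₁₂ := RingHom.id ℝ)

noncomputable instance (V : Submodule ℝ (StrongDual ℝ X)) : NormedSpace ℝ (V →L[ℝ] ℝ) :=
  ContinuousLinearMap.toNormedSpace (E := V) (F := ℝ) (σ₁₂ := RingHom.id ℝ) (𝕜' := ℝ)

noncomputable def jfunL (V : Submodule ℝ (StrongDual ℝ X)) : X →L[ℝ] StrongDual ℝ V :=
  ContinuousLinearMap.flip (E := V) (F := X) (G := ℝ) (σ₁₃ := RingHom.id ℝ)
    (σ₂₃ := RingHom.id ℝ) V.subtypeL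

theorem jfunL_eq_jfun (V : Submodule ℝ (StrongDual ℝ X)) (v : X) : jfunL V v = jfun V v := by
  ext w; rfl

theorem norm_jfunL_apply_le (V : Submodule ℝ (StrongDual ℝ X)) (v : X) : ‖jfunL V v‖ ≤ ‖v‖ :=
  ContinuousLinearMap.opNorm_le_bound _ (norm_nonneg v) fun w => by
    rw [mul_comm]; exact (w : StrongDual ℝ X).le_opNorm v

/-- The space `W` of the statement. -/
noncomputable abbrev jSpan (x : ℕ → X) (f : ℕ → X →L[ℝ] ℝ) :
    Submodule ℝ (StrongDual ℝ (dualSpan f)) :=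
  dualSpan (E := dualSpan f) fun i => jfun (dualSpan f) (x i)

variable {x : ℕ → X} {f : ℕ → X →L[ℝ] ℝ}

theorem comp_basisProj_mem_dualSpan (g : X →L[ℝ] ℝ) (n : ℕ) :
    g.comp (basisProj x f n) ∈ dualSpan f := by
  have : g.comp (basisProj x f n) = ∑ i ∈ Finset.range n, g (x i) • f i := by
    ext v
    simp [basisProj_apply, mul_comm]
  rw [this]
  exact Submodule.le_topologicalClosure _
    (Submodule.sum_mem _ fun i _ => Submodule.smul_mem _ _ (Submodule.subset_span ⟨i, rfl⟩))

noncomputable def bc2PartialSum (x : ℕ → X) (f : ℕ → X →L[ℝ] ℝ) (φ : jSpan x f →L[ℝ] ℝ)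
    (n : ℕ) : dualSpan f :=
  ∑ i ∈ Finset.range n, φ ⟨jfun (dualSpan f) (x i), mem_dualSpan _ i⟩ • ⟨f i, mem_dualSpan f i⟩

namespace IsSchauderBasis

variable (hb : IsSchauderBasis x f)
include hb

theorem norm_le_mul_norm_jfunL {K : ℝ} (hK : ∀ n, ‖basisProj x f n‖ ≤ K) (v : X) :
    ‖v‖ ≤ K * ‖jfunL (dualSpan f) v‖ := by
  have hK0 : 0 ≤ K := (norm_nonneg _).trans (hK 0)
  refine le_of_tendsto (hb.tendsto_basisProj v).norm (Eventually.of_forall fun n => ?_)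
  refine norm_le_dual_bound ℝ _ (by positivity) fun g => ?_
  calc ‖g (basisProj x f n v)‖
      = ‖jfunL (dualSpan f) v ⟨g.comp (basisProj x f n), comp_basisProj_mem_dualSpan g n⟩‖ := rfl
    _ ≤ ‖jfunL (dualSpan f) v‖ * ‖g.comp (basisProj x f n)‖ :=
        ContinuousLinearMap.le_opNorm (E := dualSpan f) (F := ℝ) (σ₁₂ := RingHom.id ℝ) _ _
    _ ≤ ‖jfunL (dualSpan f) v‖ * (‖g‖ * K) := by
        gcongr; exact (g.opNorm_comp_le _).trans (by gcongr; exact hK n)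
    _ = K * ‖jfunL (dualSpan f) v‖ * ‖g‖ := by ring

theorem jfunL_mem_jSpan (v : X) :
    jfunL (dualSpan f) v ∈ jSpan x f := by
  have hclosed : IsClosed (jSpan x f : Set (StrongDual ℝ (dualSpan f))) :=
    Submodule.isClosed_topologicalClosure _
  have hlim : Tendsto (fun n => jfunL (dualSpan f) (basisProj x f n v)) atTop
      (𝓝 (jfunL (dualSpan f) v)) :=
    ((jfunL (dualSpan f)).continuous.tendsto v).comp (hb.tendsto_basisProj v)
  refine hclosed.mem_of_tendsto hlim (Eventually.of_forall fun n => ?_)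
  refine Submodule.le_topologicalClosure _ ?_
  simp only [basisProj_apply, map_sum, map_smul]
  exact Submodule.sum_mem _ fun i _ =>
    Submodule.smul_mem _ _ (Submodule.subset_span ⟨i, (jfunL_eq_jfun _ _).symm⟩)

theorem jSpan_le_range_jfunL [CompleteSpace X] {K : ℝ} (hK : ∀ n, ‖basisProj x f n‖ ≤ K) :
    jSpan x f ≤ LinearMap.range (jfunL (dualSpan f) : X →ₗ[ℝ] StrongDual ℝ (dualSpan f)) := by
  have hK0 : 0 ≤ K := (norm_nonneg _).trans (hK 0)
  have hanti : AntilipschitzWith K.toNNReal (jfunL (dualSpan f)) :=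
    AddMonoidHomClass.antilipschitz_of_bound _ fun v => by
      rw [Real.coe_toNNReal _ hK0]; exact hb.norm_le_mul_norm_jfunL hK v
  refine Submodule.topologicalClosure_minimal _ ?_ ?_
  · rw [Submodule.span_le]
    rintro - ⟨i, rfl⟩
    exact ⟨x i, jfunL_eq_jfun _ _⟩
  · rw [LinearMap.coe_range]
    exact hanti.isClosed_range (jfunL _).uniformContinuous

noncomputable def jfunToJSpan : X →L[ℝ] jSpan x f :=
  (jfunL (dualSpan f)).codRestrict _ hb.jfunL_mem_jSpan

theorem norm_jfunToJSpan_apply_le (v : X) : ‖hb.jfunToJSpan v‖ ≤ ‖v‖ :=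
  norm_jfunL_apply_le _ v

theorem jfunToJSpan_basis (i : ℕ) :
    hb.jfunToJSpan (x i) = ⟨jfun (dualSpan f) (x i), mem_dualSpan _ i⟩ :=
  Subtype.ext (jfunL_eq_jfun _ _)

theorem jfunToJSpan_surjective [CompleteSpace X] {K : ℝ} (hK : ∀ n, ‖basisProj x f n‖ ≤ K) :
    Function.Surjective hb.jfunToJSpan := fun ⟨_, hw⟩ =>
  (hb.jSpan_le_range_jfunL hK hw).imp fun _ hv => Subtype.ext hv

theorem coe_bc2PartialSum (φ : jSpan x f →L[ℝ] ℝ) (n : ℕ) :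
    (bc2PartialSum x f φ n : StrongDual ℝ X) =
      (φ.comp hb.jfunToJSpan).comp (basisProj x f n) := by
  ext v
  simp [bc2PartialSum, basisProj_apply, hb.jfunToJSpan_basis, mul_comm]

theorem norm_bc2PartialSum_sub (φ : jSpan x f →L[ℝ] ℝ) (k l : ℕ) :
    ‖bc2PartialSum x f φ k - bc2PartialSum x f φ l‖ =
      ‖(φ.comp hb.jfunToJSpan).comp (basisProj x f k) -
        (φ.comp hb.jfunToJSpan).comp (basisProj x f l)‖ := by
  rw [← hb.coe_bc2PartialSum, ← hb.coe_bc2PartialSum]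
  rfl

theorem ca_bc2PartialSum_le {K : ℝ} (hK : ∀ n, ‖basisProj x f n‖ ≤ K)
    {φ : jSpan x f →L[ℝ] ℝ} (hφ : ‖φ‖ ≤ 1) : ca (bc2PartialSum x f φ) ≤ 2 * K * sh x := by
  set g := φ.comp hb.jfunToJSpan
  have hg : ‖g‖ ≤ 1 := ContinuousLinearMap.opNorm_le_bound _ zero_le_one fun v =>
    φ.le_of_opNorm_le_of_le hφ (hb.norm_jfunToJSpan_apply_le v)
  have hca : ∀ n, ca (bc2PartialSum x f φ) ≤ 2 * K * tailNorm x g n := fun n =>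
    ca_le_of_norm_sub_le n fun k l hk hl =>
      (hb.norm_bc2PartialSum_sub φ k l).trans_le (norm_comp_basisProj_sub_le hK g hk hl)
  calc ca (bc2PartialSum x f φ) ≤ 2 * K * limsup (tailNorm x g) atTop :=
        ge_of_tendsto ((tendsto_tailNorm_limsup x g).const_mul _) (Eventually.of_forall hca)
    _ ≤ 2 * K * sh x := by
        have hK0 : 0 ≤ K := (norm_nonneg _).trans (hK 0)
        gcongr
        exact limsup_tailNorm_le_sh x hg

theorem exists_limsup_tailNorm_le [CompleteSpace X] {K : ℝ}
    (hK : ∀ n, ‖basisProj x f n‖ ≤ K) {g : X →L[ℝ] ℝ} (hg : ‖g‖ ≤ 1) :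
    ∃ φ : jSpan x f →L[ℝ] ℝ, ‖φ‖ ≤ 1 ∧
      limsup (tailNorm x g) atTop ≤ K * ca (bc2PartialSum x f φ) := by
  have hK0 : 0 < K := zero_lt_one.trans_le (hb.one_le_norm_basisProj_one.trans (hK 1))
  obtain ⟨φ, hφg, hφ⟩ := hb.jfunToJSpan.exists_comp_eq_of_surjective
    (hb.jfunToJSpan_surjective hK) hK0.le (hb.norm_le_mul_norm_jfunL hK) (K⁻¹ • g)
  refine ⟨φ, hφ.trans ?_, ?_⟩
  · rw [norm_smul, norm_inv, Real.norm_of_nonneg hK0.le, mul_inv_cancel_left₀ hK0.ne']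
    exact hg
  have hsub : ∀ k l, ‖bc2PartialSum x f φ k - bc2PartialSum x f φ l‖ =
      K⁻¹ * ‖g.comp (basisProj x f k) - g.comp (basisProj x f l)‖ := fun k l => by
    have : (K⁻¹ • g).comp (basisProj x f k) - (K⁻¹ • g).comp (basisProj x f l) =
        K⁻¹ • (g.comp (basisProj x f k) - g.comp (basisProj x f l)) := by
      ext v; simp [mul_sub]
    rw [hb.norm_bc2PartialSum_sub, hφg, this, norm_smul, norm_inv, Real.norm_of_nonneg hK0.le]
  have hbdd : BddAbove (range fun n => ‖bc2PartialSum x f φ n‖) := by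
    refine ⟨‖φ.comp hb.jfunToJSpan‖ * K, forall_mem_range.2 fun n => ?_⟩
    change ‖(bc2PartialSum x f φ n : StrongDual ℝ X)‖ ≤ _
    rw [hb.coe_bc2PartialSum]
    exact (ContinuousLinearMap.opNorm_comp_le _ _).trans (by gcongr; exact hK n)
  rw [← inv_mul_le_iff₀ hK0]
  refine le_ca_of_forall_le hbdd fun n c hc => ?_
  have htail : tailNorm x g n ≤ K * c := hb.tailNorm_le_of_norm_comp_basisProj_sub_le
    fun k hk => by have := hc k n hk le_rfl; rw [hsub] at this; rwa [← inv_mul_le_iff₀ hK0]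
  calc K⁻¹ * limsup (tailNorm x g) atTop ≤ K⁻¹ * (K * c) := by
        gcongr; exact (limsup_tailNorm_le x g n).trans htail
    _ = c := inv_mul_cancel_left₀ hK0.ne' c

end IsSchauderBasis

end DualSpace

theorem bc2_dual_le_sh_le_general {X : Type*} [NormedAddCommGroup X] [NormedSpace ℝ X]
    [CompleteSpace X]
    (x : ℕ → X) (f : ℕ → X →L[ℝ] ℝ) (hb : IsSchauderBasis x f)
    (K : ℝ) (hK : K = ⨆ n : ℕ, ‖basisProj x f n‖) :
    (1 / (2 * K)) *
        bc2 (fun i => (⟨f i, mem_dualSpan f i⟩ : ↥(dualSpan f)))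
          (fun i => jfun (dualSpan f) (x i)) ≤ sh x ∧
    sh x ≤ K * bc2 (fun i => (⟨f i, mem_dualSpan f i⟩ : ↥(dualSpan f)))
          (fun i => jfun (dualSpan f) (x i)) := by
  have hP : ∀ n, ‖basisProj x f n‖ ≤ K := fun n => hK ▸ le_ciSup hb.bddAbove_norm_basisProj n
  have hK0 : 0 < K := zero_lt_one.trans_le (hb.one_le_norm_basisProj_one.trans (hP 1))
  have hbc2 : bc2 (fun i => (⟨f i, mem_dualSpan f i⟩ : ↥(dualSpan f)))
      (fun i => jfun (dualSpan f) (x i)) ≤ 2 * K * sh x :=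
    csSup_le ⟨_, 0, norm_zero.trans_le zero_le_one, rfl⟩ fun _ ⟨_, hφ, hc⟩ =>
      hc ▸ hb.ca_bc2PartialSum_le hP hφ
  refine ⟨?_, csSup_le ⟨_, 0, norm_zero.trans_le zero_le_one, rfl⟩ ?_⟩
  · rw [one_div, inv_mul_le_iff₀ (by positivity)]
    exact hbc2
  rintro - ⟨g, hg, rfl⟩
  obtain ⟨φ, hφ, hle⟩ := hb.exists_limsup_tailNorm_le hP hg
  exact hle.trans (by gcongr; exact le_csSup ⟨_, fun _ ⟨_, hφ', hc⟩ =>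
    hc ▸ hb.ca_bc2PartialSum_le hP hφ'⟩ ⟨φ, hφ, rfl⟩)

/-- Theorem 4.6: `(1/(2K))·bc₂((x*ₙ)) ≤ sh((xₙ)) ≤ K·bc₂((x*ₙ))`, where
`bc₂((x*ₙ))` is computed for the basic sequence `(x*ₙ)` in `V` whose biorthogonal
functionals are `(j xₙ) ⊆ V*`. -/
theorem bc2_dual_le_sh_le {X : Type*} [NormedAddCommGroup X] [NormedSpace ℝ X]
    [CompleteSpace X] (hinf : ¬ FiniteDimensional ℝ X)
    (x : ℕ → X) (f : ℕ → X →L[ℝ] ℝ) (hb : IsSchauderBasis x f)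
    (K : ℝ) (hK : K = ⨆ n : ℕ, ‖basisProj x f n‖) :
    (1 / (2 * K)) *
        bc2 (fun i => (⟨f i, mem_dualSpan f i⟩ : ↥(dualSpan f)))
          (fun i => jfun (dualSpan f) (x i)) ≤ sh x ∧
    sh x ≤ K * bc2 (fun i => (⟨f i, mem_dualSpan f i⟩ : ↥(dualSpan f)))
          (fun i => jfun (dualSpan f) (x i)) :=
  bc2_dual_le_sh_le_general x f hb K hK
end

section
/- Let c be the Banach space of convergent real sequences with the sup norm, let e₀ = (1,1,1,…) and let (e_n)_{n≥1} be the standard unit vectors, so that (e_n)_{n=0}^∞ is a Schauder basis of c satisfying ‖Σ_{i=0}^n a_i e_i‖ = max(|a₀|, |a₀+a₁|, …, |a₀+a_n|). Then bc₁((e_n)_{n=0}^∞) = 2. -/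
/-! Partial sums of norm at most one are at mutual distance at most two, so `bc₁ ≤ 2` for every
basis. For `a = (1, -2, -2, …)` the partial sums `e₀ - 2(e₁ + ⋯ + eₙ) = (-1, …, -1, 1, 1, …)`
all have norm one, while consecutive ones differ by `-2 eₙ₊₁`, of norm two. -/

open Filter Metric NormedSpace Set Topology

noncomputable section

/-- the space `ℓ∞` of bounded real sequences. -/
abbrev linf : Type := lp (fun _ : ℕ => ℝ) ⊤

/-- the space `c` of convergent real sequences, as a subspace of `ℓ∞`
(with the sup norm). -/
def convSp : Submodule ℝ linf where
  carrier := {g | ∃ l : ℝ, Tendsto (fun k => (g : ℕ → ℝ) k) atTop (𝓝 l)}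
  zero_mem' := ⟨0, by simpa using tendsto_const_nhds⟩
  add_mem' := by
    rintro g h ⟨l, hl⟩ ⟨m, hm⟩
    exact ⟨l + m, by simpa using hl.add hm⟩
  smul_mem' := by
    rintro r g ⟨l, hl⟩
    exact ⟨r * l, by simpa using hl.const_mul r⟩

/-- the constant sequence `(1,1,1,…)` as an element of `ℓ∞`. -/
def oneSeq : linf :=
  ⟨fun _ => (1 : ℝ), memℓp_infty ⟨1, by rintro r ⟨i, rfl⟩; simp⟩⟩

/-- the basis `(eₙ)_{n=0}^∞` of `c`: `e₀ = (1,1,1,…)` and, for `n ≥ 1`, `eₙ` is the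
`n`-th standard unit vector. -/
def cBasis : ℕ → ↥convSp
  | 0 => ⟨oneSeq, ⟨1, by simpa [oneSeq] using tendsto_const_nhds⟩⟩
  | (m + 1) => ⟨lp.single ⊤ m (1 : ℝ), ⟨0, by
      refine Tendsto.congr' ?_ tendsto_const_nhds
      filter_upwards [eventually_ge_atTop (m + 1)] with k hk
      have hkm : k ≠ m := by omega
      simp [lp.single, hkm]⟩⟩

section Oscillation

variable {E : Type*} [NormedAddCommGroup E]

-- `ca z` is definitionally `⨅ n, sSup (tailDists z n)`.
def tailDists (z : ℕ → E) (n : ℕ) : Set ℝ :=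
  {d : ℝ | ∃ k, n ≤ k ∧ ∃ l, n ≤ l ∧ d = ‖z k - z l‖}

lemma zero_mem_tailDists (z : ℕ → E) (n : ℕ) : (0 : ℝ) ∈ tailDists z n :=
  ⟨n, le_rfl, n, le_rfl, by simp⟩

lemma two_mul_mem_upperBounds_tailDists {z : ℕ → E} {M : ℝ} (hz : ∀ n, ‖z n‖ ≤ M)
    (n : ℕ) : 2 * M ∈ upperBounds (tailDists z n) := by
  rintro _ ⟨k, -, l, -, rfl⟩
  linarith [norm_sub_le (z k) (z l), hz k, hz l]

lemma ca_le_two_mul {z : ℕ → E} {M : ℝ} (hz : ∀ n, ‖z n‖ ≤ M) : ca z ≤ 2 * M := by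
  have hbdd n : BddAbove (tailDists z n) := ⟨_, two_mul_mem_upperBounds_tailDists hz n⟩
  have hnonneg n : 0 ≤ sSup (tailDists z n) := le_csSup (hbdd n) (zero_mem_tailDists z n)
  calc ca z ≤ sSup (tailDists z 0) := ciInf_le ⟨0, by rintro _ ⟨n, rfl⟩; exact hnonneg n⟩ 0
    _ ≤ 2 * M := csSup_le ⟨0, zero_mem_tailDists z 0⟩ (two_mul_mem_upperBounds_tailDists hz 0)

lemma le_ca {z : ℕ → E} {M c : ℝ} (hz : ∀ n, ‖z n‖ ≤ M)
    (hosc : ∀ n, ∃ k, n ≤ k ∧ ∃ l, n ≤ l ∧ c ≤ ‖z k - z l‖) : c ≤ ca z := by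
  refine le_ciInf fun n => ?_
  obtain ⟨k, hk, l, hl, hc⟩ := hosc n
  exact le_csSup_of_le ⟨_, two_mul_mem_upperBounds_tailDists hz n⟩ ⟨k, hk, l, hl, rfl⟩ hc

variable [NormedSpace ℝ E]

lemma two_mem_upperBounds_bc1 (y : ℕ → E) :
    2 ∈ upperBounds {c : ℝ | ∃ a : ℕ → ℝ,
      (∀ n, ‖∑ i ∈ Finset.range n, a i • y i‖ ≤ 1) ∧
      c = ca (fun n => ∑ i ∈ Finset.range n, a i • y i)} := by
  rintro _ ⟨a, ha, rfl⟩
  simpa using ca_le_two_mul ha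

lemma bc1_le_two (y : ℕ → E) : bc1 y ≤ 2 :=
  csSup_le ⟨_, 0, by simp, rfl⟩ (two_mem_upperBounds_bc1 y)

lemma ca_le_bc1 (y : ℕ → E) {a : ℕ → ℝ} (ha : ∀ n, ‖∑ i ∈ Finset.range n, a i • y i‖ ≤ 1) :
    ca (fun n => ∑ i ∈ Finset.range n, a i • y i) ≤ bc1 y :=
  le_csSup ⟨2, two_mem_upperBounds_bc1 y⟩ ⟨a, ha, rfl⟩

end Oscillation

lemma cBasis_zero_apply (k : ℕ) : ((cBasis 0 : linf) : ℕ → ℝ) k = 1 := rfl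

lemma cBasis_succ_apply (m k : ℕ) :
    ((cBasis (m + 1) : linf) : ℕ → ℝ) k = if k = m then 1 else 0 := by
  simp [cBasis, Pi.single_apply]

lemma norm_cBasis_succ (m : ℕ) : ‖cBasis (m + 1)‖ = 1 := by
  rw [← Submodule.norm_coe]
  simp [cBasis]

lemma cBasis_partialSum_apply (a : ℕ → ℝ) (n k : ℕ) :
    (((∑ i ∈ Finset.range (n + 1), a i • cBasis i : convSp) : linf) : ℕ → ℝ) k
      = a 0 + if k < n then a (k + 1) else 0 := by
  have hcoe : (((∑ i ∈ Finset.range (n + 1), a i • cBasis i : convSp) : linf) : ℕ → ℝ) k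
      = ∑ i ∈ Finset.range (n + 1), a i * ((cBasis i : linf) : ℕ → ℝ) k := by
    simp only [Submodule.coe_sum, Submodule.coe_smul, lp.coeFn_sum, Finset.sum_apply,
      lp.coeFn_smul, Pi.smul_apply, smul_eq_mul]
  rw [hcoe, Finset.sum_range_succ', cBasis_zero_apply, mul_one, add_comm]
  simp only [cBasis_succ_apply, mul_ite, mul_one, mul_zero, Finset.sum_ite_eq,
    Finset.mem_range]

def cExtremalCoeff : ℕ → ℝ
  | 0 => 1
  | _ + 1 => -2

lemma norm_partialSum_cExtremalCoeff_le (n : ℕ) :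
    ‖∑ i ∈ Finset.range n, cExtremalCoeff i • cBasis i‖ ≤ 1 := by
  rcases n with _ | n
  · simp
  rw [← Submodule.norm_coe]
  refine lp.norm_le_of_forall_le zero_le_one fun k => ?_
  rw [cBasis_partialSum_apply]
  split_ifs <;> norm_num [cExtremalCoeff]

lemma norm_partialSum_cExtremalCoeff_succ_sub (n : ℕ) :
    ‖∑ i ∈ Finset.range (n + 2), cExtremalCoeff i • cBasis i
      - ∑ i ∈ Finset.range (n + 1), cExtremalCoeff i • cBasis i‖ = 2 := by
  rw [Finset.sum_range_succ _ (n + 1), add_sub_cancel_left, norm_smul, norm_cBasis_succ]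
  norm_num [cExtremalCoeff]

/-- for the basis `(eₙ)_{n=0}^∞` of the space `c` of convergent
sequences, `bc₁((eₙ)) = 2`. -/
theorem bc1_cBasis : bc1 cBasis = 2 := by
  refine le_antisymm (bc1_le_two cBasis) ?_
  calc (2 : ℝ) ≤ ca (fun n => ∑ i ∈ Finset.range n, cExtremalCoeff i • cBasis i) :=
        le_ca norm_partialSum_cExtremalCoeff_le fun n =>
          ⟨n + 2, by omega, n + 1, by omega, (norm_partialSum_cExtremalCoeff_succ_sub n).ge⟩
    _ ≤ bc1 cBasis := ca_le_bc1 cBasis norm_partialSum_cExtremalCoeff_le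

end
end
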